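/- arXiv:2306.14482 — 2 statements merged into one kernel-verified Lean document; each statement's English description precedes it below -/
import Mathlib

section
/- Let X = (X₁,X₂,X₃) be a holomorphic null curve on the unit disc 𝔻 (so (X₁')²+(X₂')²+(X₃')² = 0 and X' never vanishes) with X₃(0) = 0 and X₃ not identically zero. Let c = ord₀(X₃) ≥ 1 and l = ord₀(X₁' − iX₂'). Then l ∈ {0, 2c−2} and ord₀(X₁' + iX₂') = 2c − 2 − l. -/
open Complex Filter

/-- `f` has order of vanishing `n` at `0`: `f z = z^n · g z` near `0` with `g` analytic and
nonvanishing at `0`. -/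
def HasOrderAtZero (f : ℂ → ℂ) (n : ℕ) : Prop :=
  ∃ g : ℂ → ℂ, AnalyticAt ℂ g 0 ∧ g 0 ≠ 0 ∧ ∀ᶠ z in nhds (0 : ℂ), f z = z ^ n * g z

/-!
The null condition factors as `(X₁' - iX₂')(X₁' + iX₂') = -(X₃')²`, so the orders of the two
factors add up to `2 ord₀(X₃') = 2c - 2`. Since `X'(0) ≠ 0`, the two factors cannot both vanish
at `0`, so one of the orders is zero.
-/

open Topology

theorem hasOrderAtZero_iff {f : ℂ → ℂ} {n : ℕ} :
    HasOrderAtZero f n ↔ AnalyticAt ℂ f 0 ∧ analyticOrderAt f 0 = n := by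
  refine ⟨fun ⟨g, hg, hg0, hfg⟩ ↦ ?_, fun ⟨hf, hn⟩ ↦ ?_⟩
  · have hf : AnalyticAt ℂ f 0 :=
      ((analyticAt_id.pow n).mul hg).congr (hfg.mono fun z hz ↦ hz.symm)
    exact ⟨hf, hf.analyticOrderAt_eq_natCast.mpr ⟨g, hg, hg0, by simpa using hfg⟩⟩
  · simpa [HasOrderAtZero] using hf.analyticOrderAt_eq_natCast.mp hn

theorem sub_I_mul_mul_add_I_mul (a b : ℂ) : (a - I * b) * (a + I * b) = a ^ 2 + b ^ 2 := by
  linear_combination (-b ^ 2) * I_sq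

theorem analyticOrderAt_sub_I_mul_add_analyticOrderAt_add_I_mul {a b d : ℂ → ℂ} {z₀ : ℂ}
    (ha : AnalyticAt ℂ a z₀) (hb : AnalyticAt ℂ b z₀) (hd : AnalyticAt ℂ d z₀)
    (hnull : ∀ᶠ z in 𝓝 z₀, a z ^ 2 + b z ^ 2 + d z ^ 2 = 0) :
    analyticOrderAt (fun z ↦ a z - I * b z) z₀ + analyticOrderAt (fun z ↦ a z + I * b z) z₀ =
      2 * analyticOrderAt d z₀ := by
  have hprod : ((fun z ↦ a z - I * b z) * fun z ↦ a z + I * b z) =ᶠ[𝓝 z₀] -(d ^ 2) :=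
    hnull.mono fun z hz ↦ by
      simp only [Pi.mul_apply, Pi.neg_apply, Pi.pow_apply, sub_I_mul_mul_add_I_mul]
      linear_combination hz
  rw [← analyticOrderAt_mul (by fun_prop) (by fun_prop), analyticOrderAt_congr hprod,
    analyticOrderAt_neg, analyticOrderAt_pow hd, nsmul_eq_mul, Nat.cast_ofNat]

theorem exists_analyticOrderAt_add_I_mul_eq {a b d : ℂ → ℂ} {z₀ : ℂ}
    (ha : AnalyticAt ℂ a z₀) (hb : AnalyticAt ℂ b z₀) (hd : AnalyticAt ℂ d z₀)
    (hnull : ∀ᶠ z in 𝓝 z₀, a z ^ 2 + b z ^ 2 + d z ^ 2 = 0) {l k : ℕ}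
    (hl : analyticOrderAt (fun z ↦ a z - I * b z) z₀ = l) (hk : analyticOrderAt d z₀ = k) :
    ∃ m : ℕ, analyticOrderAt (fun z ↦ a z + I * b z) z₀ = m ∧ l + m = 2 * k := by
  have hsum := analyticOrderAt_sub_I_mul_add_analyticOrderAt_add_I_mul ha hb hd hnull
  rw [hl, hk] at hsum
  obtain ⟨m, hm⟩ : ∃ m : ℕ, (m : ℕ∞) = analyticOrderAt (fun z ↦ a z + I * b z) z₀ :=
    ENat.ne_top_iff_exists.mp fun htop ↦ by
      rw [htop, add_top] at hsum
      exact ENat.top_ne_natCast (2 * k) (by exact_mod_cast hsum)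
  rw [← hm] at hsum
  exact ⟨m, hm.symm, by exact_mod_cast hsum⟩

theorem sub_I_mul_ne_zero_or_add_I_mul_ne_zero {a b d : ℂ} (hnull : a ^ 2 + b ^ 2 + d ^ 2 = 0)
    (hne : ¬(a = 0 ∧ b = 0 ∧ d = 0)) : a - I * b ≠ 0 ∨ a + I * b ≠ 0 := by
  by_contra! h
  obtain ⟨hsub, hadd⟩ := h
  have ha : a = 0 := by linear_combination (hsub + hadd) / 2
  have hb : b = 0 := by linear_combination (I / 2) * hsub - (I / 2) * hadd + b * I_sq
  subst ha hb
  exact hne ⟨rfl, rfl, pow_eq_zero_iff two_ne_zero |>.mp (by simpa using hnull)⟩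

theorem stmt14_general (X₁ X₂ X₃ : ℂ → ℂ)
    (hX₁ : DifferentiableOn ℂ X₁ (Metric.ball (0 : ℂ) 1))
    (hX₂ : DifferentiableOn ℂ X₂ (Metric.ball (0 : ℂ) 1))
    (hnull : ∀ z ∈ Metric.ball (0 : ℂ) 1,
      deriv X₁ z ^ 2 + deriv X₂ z ^ 2 + deriv X₃ z ^ 2 = 0)
    (himm : ∀ z ∈ Metric.ball (0 : ℂ) 1,
      ¬(deriv X₁ z = 0 ∧ deriv X₂ z = 0 ∧ deriv X₃ z = 0))
    (c l : ℕ) (hc1 : 1 ≤ c)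
    (hc : HasOrderAtZero X₃ c)
    (hl : HasOrderAtZero (fun z => deriv X₁ z - I * deriv X₂ z) l) :
    (l = 0 ∨ l = 2 * c - 2) ∧
    HasOrderAtZero (fun z => deriv X₁ z + I * deriv X₂ z) (2 * c - 2 - l) := by
  have h0 : (0 : ℂ) ∈ Metric.ball (0 : ℂ) 1 := Metric.mem_ball_self one_pos
  have hd₁ := (hX₁.analyticOnNhd Metric.isOpen_ball).deriv 0 h0
  have hd₂ := (hX₂.analyticOnNhd Metric.isOpen_ball).deriv 0 h0
  obtain ⟨hX₃, hc⟩ := hasOrderAtZero_iff.mp hc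
  obtain ⟨hf, hl⟩ := hasOrderAtZero_iff.mp hl
  have hg : AnalyticAt ℂ (fun z ↦ deriv X₁ z + I * deriv X₂ z) 0 := by fun_prop
  have hd₃ : analyticOrderAt (deriv X₃) 0 = (c - 1 : ℕ) :=
    analyticOrderAt_deriv_of_pos hX₃ (by rw [hc]; norm_cast; omega)
  obtain ⟨m, hm, hsum⟩ := exists_analyticOrderAt_add_I_mul_eq hd₁ hd₂ hX₃.deriv
    (eventually_of_mem (Metric.isOpen_ball.mem_nhds h0) hnull) hl hd₃
  have hunit : l = 0 ∨ m = 0 := by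
    rw [← Nat.cast_eq_zero (R := ℕ∞), ← Nat.cast_eq_zero (R := ℕ∞), ← hl, ← hm,
      hf.analyticOrderAt_eq_zero, hg.analyticOrderAt_eq_zero]
    exact sub_I_mul_ne_zero_or_add_I_mul_ne_zero (hnull 0 h0) (himm 0 h0)
  refine ⟨by omega, hasOrderAtZero_iff.mpr ⟨hg, ?_⟩⟩
  rw [hm]
  congr 1
  omega

theorem stmt14 (X₁ X₂ X₃ : ℂ → ℂ)
    (hX₁ : DifferentiableOn ℂ X₁ (Metric.ball (0 : ℂ) 1))
    (hX₂ : DifferentiableOn ℂ X₂ (Metric.ball (0 : ℂ) 1))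
    (hX₃ : DifferentiableOn ℂ X₃ (Metric.ball (0 : ℂ) 1))
    (hnull : ∀ z ∈ Metric.ball (0 : ℂ) 1,
      deriv X₁ z ^ 2 + deriv X₂ z ^ 2 + deriv X₃ z ^ 2 = 0)
    (himm : ∀ z ∈ Metric.ball (0 : ℂ) 1,
      ¬(deriv X₁ z = 0 ∧ deriv X₂ z = 0 ∧ deriv X₃ z = 0))
    (hzero : X₃ 0 = 0)
    (c l : ℕ) (hc1 : 1 ≤ c)
    (hc : HasOrderAtZero X₃ c)
    (hl : HasOrderAtZero (fun z => deriv X₁ z - I * deriv X₂ z) l) :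
    (l = 0 ∨ l = 2 * c - 2) ∧
    HasOrderAtZero (fun z => deriv X₁ z + I * deriv X₂ z) (2 * c - 2 - l) :=
  stmt14_general X₁ X₂ X₃ hX₁ hX₂ hnull himm c l hc1 hc hl
end

section
/- For the matrix-valued map F = 𝒯 ∘ X where X = (X₁,X₂,X₃) : 𝔻* → ℂ²×ℂ* is holomorphic, the entries S of F'F⁻¹ satisfy S₁₂ = (X₁' + iX₂')/X₃², S₁₁ = −S₂₂ = −X₃'/X₃ − (X₁−iX₂)(X₁'+iX₂')/X₃², and S₂₁ = (X₁'−iX₂') − (X₁−iX₂)²(X₁'+iX₂')/X₃² − 2(X₁−iX₂)X₃'/X₃. -/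
/-!
In the null coordinates `u = X₁ + iX₂`, `v = X₁ − iX₂` one has `X₁² + X₂² = uv`, so
`F = X₃⁻¹ • M` with `M = [[1, u], [v, uv + X₃²]]` and `det M = X₃²`. Hence `F⁻¹ = X₃⁻¹ • adj M`
and `F' F⁻¹ = -(X₃'/X₃) • 1 + X₃⁻² • M' adj M`, whose entries are read off directly.
-/

open Complex Matrix

namespace NullTwistor

variable {𝕜 : Type*} [NontriviallyNormedField 𝕜]

noncomputable def entrywiseDeriv {m n : Type*} (F : 𝕜 → Matrix m n 𝕜) (z : 𝕜) :
    Matrix m n 𝕜 :=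
  of fun i j => deriv (fun w => F w i j) z

def matrix (u v c : 𝕜) : Matrix (Fin 2) (Fin 2) 𝕜 :=
  !![1, u; v, u * v + c ^ 2]

def derivMatrix (u v c u' v' c' : 𝕜) : Matrix (Fin 2) (Fin 2) 𝕜 :=
  !![0, u'; v', u' * v + u * v' + 2 * c * c']

lemma det_matrix (u v c : 𝕜) : (matrix u v c).det = c ^ 2 := by
  simp only [matrix, det_fin_two_of]
  ring

lemma inv_inv_smul_matrix {u v c : 𝕜} (hc : c ≠ 0) :
    (c⁻¹ • matrix u v c)⁻¹ = c⁻¹ • adjugate (matrix u v c) := by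
  refine inv_eq_left_inv ?_
  have hscalar : c⁻¹ * c⁻¹ * c ^ 2 = 1 := by field_simp
  rw [smul_mul_smul, adjugate_mul, det_matrix, smul_smul, hscalar, one_smul]

section Deriv

variable {u v c : 𝕜 → 𝕜} {u' v' c' z : 𝕜}

lemma hasDerivAt_matrix_apply (hu : HasDerivAt u u' z) (hv : HasDerivAt v v' z)
    (hc : HasDerivAt c c' z) (i j : Fin 2) :
    HasDerivAt (fun w => matrix (u w) (v w) (c w) i j)
      (derivMatrix (u z) (v z) (c z) u' v' c' i j) z := by
  fin_cases i <;> fin_cases j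
  · exact hasDerivAt_const z 1
  · exact hu
  · exact hv
  · refine ((hu.mul hv).add (hc.pow 2)).congr_deriv ?_
    simp [derivMatrix]

lemma entrywiseDeriv_inv_smul_matrix (hu : HasDerivAt u u' z) (hv : HasDerivAt v v' z)
    (hc : HasDerivAt c c' z) (hcz : c z ≠ 0) :
    entrywiseDeriv (fun w => (c w)⁻¹ • matrix (u w) (v w) (c w)) z =
      (-c' / c z ^ 2) • matrix (u z) (v z) (c z) +
        (c z)⁻¹ • derivMatrix (u z) (v z) (c z) u' v' c' := by
  ext i j
  exact ((hc.inv hcz).mul (hasDerivAt_matrix_apply hu hv hc i j)).deriv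

theorem entrywiseDeriv_mul_inv_eq (hu : HasDerivAt u u' z) (hv : HasDerivAt v v' z)
    (hc : HasDerivAt c c' z) (hcz : c z ≠ 0) :
    entrywiseDeriv (fun w => (c w)⁻¹ • matrix (u w) (v w) (c w)) z *
        ((c z)⁻¹ • matrix (u z) (v z) (c z))⁻¹ =
      !![-c' / c z - v z * u' / c z ^ 2, u' / c z ^ 2;
        v' - v z ^ 2 * u' / c z ^ 2 - 2 * v z * c' / c z, c' / c z + v z * u' / c z ^ 2] := by
  rw [entrywiseDeriv_inv_smul_matrix hu hv hc hcz, inv_inv_smul_matrix hcz, add_mul,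
    smul_mul_smul, smul_mul_smul, mul_adjugate, det_matrix]
  ext i j
  fin_cases i <;> fin_cases j <;>
    simp [derivMatrix, matrix, adjugate_fin_two] <;>
    field_simp <;> ring

end Deriv

lemma matrix_add_I_mul_sub_I_mul (a b c : ℂ) :
    matrix (a + I * b) (a - I * b) c = !![1, a + I * b; a - I * b, a ^ 2 + b ^ 2 + c ^ 2] := by
  have hnull : (a + I * b) * (a - I * b) = a ^ 2 + b ^ 2 := by
    ring_nf
    rw [I_sq]
    ring
  rw [matrix, hnull]

end NullTwistor

theorem stmt16 (X₁ X₂ X₃ : ℂ → ℂ)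
    (Ω : Set ℂ) (hΩ : Ω = Metric.ball (0 : ℂ) 1 \ {0})
    (hX₁ : DifferentiableOn ℂ X₁ Ω) (hX₂ : DifferentiableOn ℂ X₂ Ω)
    (hX₃ : DifferentiableOn ℂ X₃ Ω)
    (hX₃ne : ∀ z ∈ Ω, X₃ z ≠ 0)
    (F : ℂ → Matrix (Fin 2) (Fin 2) ℂ)
    (hF : ∀ z, F z = (X₃ z)⁻¹ •
      !![(1 : ℂ), X₁ z + I * X₂ z; X₁ z - I * X₂ z, X₁ z ^ 2 + X₂ z ^ 2 + X₃ z ^ 2])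
    (S : ℂ → Matrix (Fin 2) (Fin 2) ℂ)
    (hS : ∀ z, S z = (Matrix.of fun i j => deriv (fun w => F w i j) z) * (F z)⁻¹) :
    ∀ z ∈ Ω,
      S z 0 1 = (deriv X₁ z + I * deriv X₂ z) / X₃ z ^ 2 ∧
      S z 0 0 = -deriv X₃ z / X₃ z
        - (X₁ z - I * X₂ z) * (deriv X₁ z + I * deriv X₂ z) / X₃ z ^ 2 ∧
      S z 1 1 = -(S z 0 0) ∧
      S z 1 0 = (deriv X₁ z - I * deriv X₂ z)
        - (X₁ z - I * X₂ z) ^ 2 * (deriv X₁ z + I * deriv X₂ z) / X₃ z ^ 2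
        - 2 * (X₁ z - I * X₂ z) * deriv X₃ z / X₃ z := by
  intro z hz
  have hΩz : Ω ∈ nhds z := (hΩ ▸ Metric.isOpen_ball.sdiff isClosed_singleton).mem_nhds hz
  have h₁ := (hX₁.differentiableAt hΩz).hasDerivAt
  have h₂ := (hX₂.differentiableAt hΩz).hasDerivAt
  have h₃ := (hX₃.differentiableAt hΩz).hasDerivAt
  have hu : HasDerivAt (fun w => X₁ w + I * X₂ w) (deriv X₁ z + I * deriv X₂ z) z :=
    h₁.add (h₂.const_mul I)
  have hv : HasDerivAt (fun w => X₁ w - I * X₂ w) (deriv X₁ z - I * deriv X₂ z) z :=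
    h₁.sub (h₂.const_mul I)
  have hSz := NullTwistor.entrywiseDeriv_mul_inv_eq hu hv h₃ (hX₃ne z hz)
  simp only [NullTwistor.entrywiseDeriv, NullTwistor.matrix_add_I_mul_sub_I_mul, ← hF, ← hS]
    at hSz
  simp only [hSz, of_apply, cons_val', cons_val_zero, cons_val_one, empty_val', cons_val_fin_one,
    true_and, and_true]
  ring
end
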